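/- For a graph isomorphism f : G → H and node v of G, conjugating Image_G(v, k) by the permutation matrix of f yields Image_H(f(v), k); i.e., the matrix interpretation of the cover of sieves is equivariant under graph isomorphisms. -/
import Mathlib


open Matrix

namespace GGNN

open scoped Classical

/-- The operation `A ∘ B = A + B + A·B` on matrices. -/
def op {V : Type*} [Fintype V] (A B : Matrix V V ℝ) : Matrix V V ℝ :=
  A + B + A * B

/-- The BFS layer `N_k(v)`: vertices of `G` at graph distance exactly `k`
from `v`. -/
def layer {V : Type*} (G : SimpleGraph V) (v : V) (k : ℕ) : Set V :=
  {w | G.Reachable v w ∧ G.dist v w = k}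

/-- `T_k = Σ_{e ∈ M_k(v)} Rep(e)`, where `M_k(v)` is the set of directed
edges from the layer `N_k(v)` to the layer `N_{k-1}(v)`: entry `(w, u)` is `1`
iff `w → u` is such an edge. -/
noncomputable def Tmat {V : Type*} [Fintype V] (G : SimpleGraph V) (v : V) (k : ℕ) :
    Matrix V V ℝ :=
  Matrix.of fun w u =>
    if G.Adj w u ∧ w ∈ layer G v k ∧ u ∈ layer G v (k - 1) then 1 else 0

/-- `Image(v,k) = T_k ∘ T_{k-1} ∘ ⋯ ∘ T_1` (the empty product being the zero
matrix, the identity of `∘`). -/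
noncomputable def imageM {V : Type*} [Fintype V] (G : SimpleGraph V) (v : V) :
    ℕ → Matrix V V ℝ
  | 0 => 0
  | k + 1 => op (Tmat G v (k + 1)) (imageM G v k)


/-- The permutation matrix of a permutation `σ` of the vertices. -/
def permMat {V : Type*} [DecidableEq V] (σ : Equiv.Perm V) : Matrix V V ℝ :=
  Matrix.of fun i j => if i = σ j then 1 else 0

lemma dist_map_le {V : Type*} {G H : SimpleGraph V} (f : G ≃g H) (u w : V)
    (h : G.Reachable u w) : H.dist (f u) (f w) ≤ G.dist u w := by
  obtain ⟨p, hp⟩ := h.exists_walk_length_eq_dist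
  calc H.dist (f u) (f w) ≤ (p.map f.toHom).length := SimpleGraph.dist_le _
    _ = G.dist u w := by rw [SimpleGraph.Walk.length_map, hp]

lemma dist_map {V : Type*} {G H : SimpleGraph V} (f : G ≃g H) (u w : V) :
    H.dist (f u) (f w) = G.dist u w := by
  by_cases h : G.Reachable u w
  · refine le_antisymm (dist_map_le f u w h) ?_
    have := dist_map_le f.symm (f u) (f w)
      ((SimpleGraph.Iso.reachable_iff (φ := f)).mpr h)
    simpa using this
  · have h' : ¬ H.Reachable (f u) (f w) :=
      fun hh => h ((SimpleGraph.Iso.reachable_iff (φ := f)).mp hh)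
    rw [SimpleGraph.dist_eq_zero_iff_eq_or_not_reachable.mpr (Or.inr h'),
      SimpleGraph.dist_eq_zero_iff_eq_or_not_reachable.mpr (Or.inr h)]

lemma layer_map {V : Type*} {G H : SimpleGraph V} (f : G ≃g H) (v w : V) (k : ℕ) :
    f w ∈ layer H (f v) k ↔ w ∈ layer G v k := by
  unfold layer
  simp [SimpleGraph.Iso.reachable_iff (φ := f), dist_map f v w]

lemma conj_entry {V : Type*} [Fintype V] [DecidableEq V] (σ : Equiv.Perm V)
    (A : Matrix V V ℝ) (i j : V) :
    (permMat σ * A * (permMat σ)ᵀ) i j = A (σ.symm i) (σ.symm j) := by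
  simp only [Matrix.mul_apply, permMat, Matrix.transpose_apply, Matrix.of_apply]
  rw [Finset.sum_eq_single (σ.symm j)]
  · rw [Finset.sum_eq_single (σ.symm i)]
    · simp
    · intro b _ hb
      have : i ≠ σ b := fun h => hb (by simp [h])
      simp [this]
    · simp
  · intro b _ hb
    have : j ≠ σ b := fun h => hb (by simp [h])
    simp [this]
  · simp

lemma perm_key {V : Type*} [Fintype V] [DecidableEq V] (σ : Equiv.Perm V) :
    (permMat σ)ᵀ * permMat σ = 1 := by
  ext i j
  simp only [Matrix.mul_apply, permMat, Matrix.transpose_apply, Matrix.of_apply]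
  rw [Finset.sum_eq_single (σ i)]
  · by_cases h : i = j <;> simp [h, Matrix.one_apply]
  · intro b _ hb
    have : b ≠ σ i := hb
    simp [this]
  · simp

lemma conj_mul {V : Type*} [Fintype V] [DecidableEq V] (σ : Equiv.Perm V)
    (A B : Matrix V V ℝ) :
    (permMat σ * A * (permMat σ)ᵀ) * (permMat σ * B * (permMat σ)ᵀ) =
      permMat σ * (A * B) * (permMat σ)ᵀ := by
  calc (permMat σ * A * (permMat σ)ᵀ) * (permMat σ * B * (permMat σ)ᵀ)
      = permMat σ * (A * (((permMat σ)ᵀ * permMat σ) * (B * (permMat σ)ᵀ))) := by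
        simp [Matrix.mul_assoc]
    _ = permMat σ * (A * B) * (permMat σ)ᵀ := by
        rw [perm_key]; simp [Matrix.mul_assoc]

lemma conj_Tmat {V : Type*} [Fintype V] [DecidableEq V]
    {G H : SimpleGraph V} (f : G ≃g H) (v : V) (k : ℕ) :
    permMat f.toEquiv * Tmat G v k * (permMat f.toEquiv)ᵀ = Tmat H (f v) k := by
  ext i j
  obtain ⟨w, rfl⟩ := f.toEquiv.surjective i
  obtain ⟨u, rfl⟩ := f.toEquiv.surjective j
  rw [conj_entry]
  simp only [Equiv.symm_apply_apply, Tmat, Matrix.of_apply]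
  congr 1
  have ha : H.Adj (f.toEquiv w) (f.toEquiv u) ↔ G.Adj w u := f.map_adj_iff
  have h1 := layer_map f v w k
  have h2 := layer_map f v u (k - 1)
  rw [eq_iff_iff]
  constructor
  · rintro ⟨x, y, z⟩; exact ⟨ha.mpr x, h1.mpr y, h2.mpr z⟩
  · rintro ⟨x, y, z⟩; exact ⟨ha.mp x, h1.mp y, h2.mp z⟩

/-- The matrix interpretation of the cover of sieves is equivariant under
graph isomorphisms: for a graph isomorphism `f : G → H` with permutation
matrix `P`, conjugating `Image_G(v, k)` by `P` yields `Image_H(f(v), k)`. -/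
theorem image_equivariant {V : Type*} [Fintype V] [DecidableEq V]
    (G H : SimpleGraph V) (f : G ≃g H) (v : V) (k : ℕ) :
    permMat f.toEquiv * imageM G v k * (permMat f.toEquiv)ᵀ =
      imageM H (f v) k := by
  induction k with
  | zero => simp [imageM]
  | succ k ih =>
    simp only [imageM, op]
    rw [← conj_Tmat f v (k+1), ← ih, conj_mul]
    simp only [Matrix.add_mul, Matrix.mul_add]

end GGNN
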